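/- Let f : ℝⁿ → ℝ be the pointwise maximum of C¹ convex functions f₀,...,f_p, and A(x̄) = {i : fᵢ(x̄) = f(x̄)}. Then ∂f(x̄) = conv{∇fᵢ(x̄) : i ∈ A(x̄)}. If moreover the gradients {∇fᵢ(x̄) : i ∈ A(x̄)} are affinely independent and ḡ = Σ_{i∈A(x̄)} αᵢ∇fᵢ(x̄) with all αᵢ > 0 and Σαᵢ = 1, then the U-space {d : dᵀ(g−ḡ)=0 ∀ g ∈ ∂f(x̄)} equals the orthogonal complement of span{∇fᵢ(x̄) − ∇f_j(x̄) : i ∈ A(x̄)} for any fixed j ∈ A(x̄). -/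

import Mathlib

open scoped RealInnerProductSpace

/-- The convex subdifferential. -/
def subdiff {n : ℕ} (f : EuclideanSpace ℝ (Fin n) → ℝ) (x : EuclideanSpace ℝ (Fin n)) :
    Set (EuclideanSpace ℝ (Fin n)) :=
  {g | ∀ y, f x + ⟪g, y - x⟫ ≤ f y}

/-!
Each active gradient is a subgradient of the maximum, and subdifferentials are convex, which gives
one inclusion. Conversely, if a subgradient `g` lay outside the compact hull of the active
gradients, a separating direction `d` would satisfy `⟪∇fᵢ x̄, d⟫ < ⟪g, d⟫` for every active `i`;
then `F (x̄ + t • d) < F x̄ + t * ⟪g, d⟫` for small `t > 0` (the inactive `fᵢ` stay below by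
continuity), against the subgradient inequality. Once `∂F x̄` is that hull, the U-space condition
needs checking only at the active gradients, and as `ḡ` is an affine combination of them it is
orthogonality to the differences `∇fᵢ x̄ - ∇f_j x̄`.
-/

open Filter Set Topology

section InnerProductSpace

variable {E : Type*} [NormedAddCommGroup E] [InnerProductSpace ℝ E]

theorem ContinuousAt.eventually_comp_add_smul_lt {f : E → ℝ} {x : E} (hf : ContinuousAt f x)
    {a : ℝ} (ha : f x < a) (d : E) (c : ℝ) :
    ∀ᶠ t in 𝓝 (0 : ℝ), f (x + t • d) < a + t * c := by
  have hline : ContinuousAt (fun t : ℝ => f (x + t • d)) 0 :=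
    hf.comp_of_eq (by fun_prop) (by simp)
  exact hline.eventually_lt (by fun_prop) (by simpa using ha)

variable [CompleteSpace E]

theorem DifferentiableAt.hasDerivAt_comp_add_smul {f : E → ℝ} {x : E}
    (hf : DifferentiableAt ℝ f x) (d : E) :
    HasDerivAt (fun t : ℝ => f (x + t • d)) ⟪gradient f x, d⟫ 0 := by
  have hline : HasDerivAt (fun t : ℝ => x + t • d) d 0 := by
    simpa using ((hasDerivAt_id (0 : ℝ)).smul_const d).const_add x
  have hf' : HasFDerivAt f (InnerProductSpace.toDual ℝ E (gradient f x)) (x + (0 : ℝ) • d) := by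
    simpa using hf.hasGradientAt.hasFDerivAt
  have := hf'.comp_hasDerivAt 0 hline
  rwa [InnerProductSpace.toDual_apply_apply] at this

theorem DifferentiableAt.eventually_comp_add_smul_lt {f : E → ℝ} {x d : E}
    (hf : DifferentiableAt ℝ f x) {c : ℝ} (hc : ⟪gradient f x, d⟫ < c) :
    ∀ᶠ t in 𝓝[>] (0 : ℝ), f (x + t • d) < f x + t * c := by
  have hslope := (hf.hasDerivAt_comp_add_smul d).hasDerivWithinAt.limsup_slope_le'
    (s := Ioi 0) (by simp) hc
  filter_upwards [hslope, self_mem_nhdsWithin] with t ht (htpos : 0 < t)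
  rw [slope_def_field, div_lt_iff₀ (by simpa using htpos)] at ht
  simp only [zero_smul, add_zero, sub_zero] at ht
  linarith

theorem ConvexOn.add_inner_gradient_le {f : E → ℝ} (hconv : ConvexOn ℝ univ f) {x : E}
    (hf : DifferentiableAt ℝ f x) (y : E) : f x + ⟪gradient f x, y - x⟫ ≤ f y := by
  have hline : ConvexOn ℝ univ fun t : ℝ => f (x + t • (y - x)) := by
    simpa [Function.comp_def, AffineMap.lineMap_apply, add_comm] using
      hconv.comp_affineMap (AffineMap.lineMap x y)
  have := hline.le_slope_of_hasDerivAt (mem_univ 0) (mem_univ 1) one_pos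
    (hf.hasDerivAt_comp_add_smul (y - x))
  simp only [slope_def_field, one_smul, zero_smul, add_zero, add_sub_cancel, sub_zero,
    div_one] at this
  linarith

theorem exists_forall_inner_lt_of_notMem {s : Set E} (hconv : Convex ℝ s) (hclosed : IsClosed s)
    {g : E} (hg : g ∉ s) : ∃ d, ∀ k ∈ s, ⟪k, d⟫ < ⟪g, d⟫ := by
  obtain ⟨l, u, hs, hu⟩ := geometric_hahn_banach_closed_point hconv hclosed hg
  set d := (InnerProductSpace.toDual ℝ E).symm l
  have hd : ∀ w, ⟪w, d⟫ = l w := fun w => by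
    rw [real_inner_comm]; exact InnerProductSpace.toDual_symm_apply
  exact ⟨d, fun k hk => by simpa only [hd] using (hs k hk).trans hu⟩

theorem eventually_sup'_comp_add_smul_lt {ι : Type*} [Fintype ι] [Nonempty ι] {fs : ι → E → ℝ}
    {F : E → ℝ} (hF : F = fun y => Finset.univ.sup' Finset.univ_nonempty fun i => fs i y)
    {x d : E} (hdiff : ∀ i, DifferentiableAt ℝ (fs i) x) {c : ℝ}
    (hc : ∀ i, fs i x = F x → ⟪gradient (fs i) x, d⟫ < c) :
    ∀ᶠ t in 𝓝[>] (0 : ℝ), F (x + t • d) < F x + t * c := by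
  subst hF
  simp only [Finset.sup'_lt_iff, Finset.mem_univ, true_imp_iff]
  refine eventually_all.2 fun i => ?_
  by_cases hact : fs i x = Finset.univ.sup' Finset.univ_nonempty fun i => fs i x
  · rw [← hact]
    exact (hdiff i).eventually_comp_add_smul_lt (hc i hact)
  · have hlt := lt_of_le_of_ne (Finset.le_sup' (fun i => fs i x) (Finset.mem_univ i)) hact
    exact nhdsWithin_le_nhds ((hdiff i).continuousAt.eventually_comp_add_smul_lt hlt d c)

end InnerProductSpace

section Subdifferential

variable {n : ℕ}

theorem convex_subdiff (f : EuclideanSpace ℝ (Fin n) → ℝ) (x : EuclideanSpace ℝ (Fin n)) :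
    Convex ℝ (subdiff f x) := by
  intro g₁ hg₁ g₂ hg₂ a b ha hb hab y
  calc f x + ⟪a • g₁ + b • g₂, y - x⟫
      = a * (f x + ⟪g₁, y - x⟫) + b * (f x + ⟪g₂, y - x⟫) := by
        rw [inner_add_left, real_inner_smul_left, real_inner_smul_left]
        linear_combination (-(f x)) * hab
    _ ≤ a * f y + b * f y := by gcongr <;> simp_all [subdiff]
    _ = f y := by linear_combination (f y) * hab

theorem ConvexOn.gradient_mem_subdiff {f : EuclideanSpace ℝ (Fin n) → ℝ}
    (hconv : ConvexOn ℝ univ f) {x : EuclideanSpace ℝ (Fin n)} (hf : DifferentiableAt ℝ f x) :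
    gradient f x ∈ subdiff f x :=
  hconv.add_inner_gradient_le hf

theorem subdiff_subset_of_le {f h : EuclideanSpace ℝ (Fin n) → ℝ} {x : EuclideanSpace ℝ (Fin n)}
    (hle : ∀ y, h y ≤ f y) (hx : h x = f x) : subdiff h x ⊆ subdiff f x :=
  fun _ hg y => hx ▸ (hg y).trans (hle y)

variable {ι : Type*} [Fintype ι] [Nonempty ι] {fs : ι → EuclideanSpace ℝ (Fin n) → ℝ}
  {F : EuclideanSpace ℝ (Fin n) → ℝ}

theorem exists_inner_le_of_mem_subdiff_sup'
    (hF : F = fun y => Finset.univ.sup' Finset.univ_nonempty fun i => fs i y)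
    {x : EuclideanSpace ℝ (Fin n)} (hdiff : ∀ i, DifferentiableAt ℝ (fs i) x)
    {g : EuclideanSpace ℝ (Fin n)} (hg : g ∈ subdiff F x) (d : EuclideanSpace ℝ (Fin n)) :
    ∃ i, fs i x = F x ∧ ⟪g, d⟫ ≤ ⟪gradient (fs i) x, d⟫ := by
  by_contra! hlt
  obtain ⟨t, hdescent, ht⟩ :=
    ((eventually_sup'_comp_add_smul_lt hF hdiff hlt).and self_mem_nhdsWithin).exists
  have hsub := hg (x + t • d)
  rw [add_sub_cancel_left, real_inner_smul_right] at hsub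
  linarith

theorem subdiff_sup'_eq_convexHull
    (hF : F = fun y => Finset.univ.sup' Finset.univ_nonempty fun i => fs i y)
    (hconv : ∀ i, ConvexOn ℝ univ (fs i)) {x : EuclideanSpace ℝ (Fin n)}
    (hdiff : ∀ i, DifferentiableAt ℝ (fs i) x) :
    subdiff F x = convexHull ℝ {g | ∃ i, fs i x = F x ∧ g = gradient (fs i) x} := by
  have hle : ∀ i y, fs i y ≤ F y := fun i y =>
    hF ▸ Finset.le_sup' (fun i => fs i y) (Finset.mem_univ i)
  refine Subset.antisymm (fun g hg => ?_) (convexHull_min ?_ (convex_subdiff F x))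
  · by_contra hgK
    have hfinite : {g | ∃ i, fs i x = F x ∧ g = gradient (fs i) x}.Finite :=
      (finite_range fun i => gradient (fs i) x).subset (by rintro - ⟨i, -, rfl⟩; exact ⟨i, rfl⟩)
    obtain ⟨d, hd⟩ := exists_forall_inner_lt_of_notMem (convex_convexHull ℝ _)
      (hfinite.isCompact_convexHull ℝ).isClosed hgK
    obtain ⟨i, hact, hi⟩ := exists_inner_le_of_mem_subdiff_sup' hF hdiff hg d
    exact (hd _ (subset_convexHull ℝ _ ⟨i, hact, rfl⟩)).not_ge hi
  · rintro - ⟨i, hact, rfl⟩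
    exact subdiff_subset_of_le (hle i) hact ((hconv i).gradient_mem_subdiff (hdiff i))

end Subdifferential

theorem Finset.sum_filter_smul_sub_mem_span {R M ι : Type*} [Ring R] [AddCommGroup M] [Module R M]
    [Fintype ι] (v : ι → M) (P : ι → Prop) [DecidablePred P] (α : ι → R)
    (hα : ∑ i ∈ univ.filter P, α i = 1) (j : ι) :
    ∑ i ∈ univ.filter P, α i • v i - v j ∈ Submodule.span R {w | ∃ i, P i ∧ w = v i - v j} := by
  have : ∑ i ∈ univ.filter P, α i • v i - v j = ∑ i ∈ univ.filter P, α i • (v i - v j) := by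
    simp only [smul_sub, Finset.sum_sub_distrib, ← Finset.sum_smul, hα, one_smul]
  rw [this]
  exact Submodule.sum_mem _ fun i hi =>
    Submodule.smul_mem _ _ (Submodule.subset_span ⟨i, (mem_filter.1 hi).2, rfl⟩)

section InnerProductSpace

variable {E : Type*} [NormedAddCommGroup E] [InnerProductSpace ℝ E]

theorem Submodule.mem_orthogonal_span_iff {s : Set E} {d : E} :
    d ∈ (Submodule.span ℝ s)ᗮ ↔ ∀ u ∈ s, ⟪u, d⟫ = 0 := by
  refine ⟨fun h u hu => h u (Submodule.subset_span hu), fun h u hu => ?_⟩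
  have : Submodule.span ℝ s ≤ (ℝ ∙ d)ᗮ :=
    Submodule.span_le.2 fun u hu => Submodule.mem_orthogonal_singleton_iff_inner_left.2 (h u hu)
  exact Submodule.mem_orthogonal_singleton_iff_inner_left.1 (this hu)

theorem forall_mem_convexHull_inner_sub_eq_zero_iff {K : Set E} {b d : E} :
    (∀ g ∈ convexHull ℝ K, ⟪d, g - b⟫ = 0) ↔ ∀ k ∈ K, ⟪d, k - b⟫ = 0 := by
  simp only [inner_sub_right, sub_eq_zero]
  refine ⟨fun h k hk => h k (subset_convexHull ℝ K hk), fun h => ?_⟩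
  exact convexHull_min h (convex_hyperplane (innerₛₗ ℝ d).isLinear _)

theorem setOf_forall_convexHull_inner_sub_eq_zero_eq_orthogonal {ι : Type*} (v : ι → E)
    (P : ι → Prop) {j : ι} (hj : P j) {b : E}
    (hb : b - v j ∈ Submodule.span ℝ {w | ∃ i, P i ∧ w = v i - v j}) :
    {d | ∀ g ∈ convexHull ℝ {g | ∃ i, P i ∧ g = v i}, ⟪d, g - b⟫ = 0} =
      ↑(Submodule.span ℝ {w | ∃ i, P i ∧ w = v i - v j})ᗮ := by
  ext d
  simp only [mem_ofPred_eq, SetLike.mem_coe, forall_mem_convexHull_inner_sub_eq_zero_iff]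
  constructor
  · rw [Submodule.mem_orthogonal_span_iff]
    rintro h - ⟨i, hi, rfl⟩
    rw [real_inner_comm, ← sub_sub_sub_cancel_right _ _ b, inner_sub_right, h _ ⟨i, hi, rfl⟩,
      h _ ⟨j, hj, rfl⟩, sub_zero]
  · rintro hd - ⟨i, hi, rfl⟩
    rw [← sub_sub_sub_cancel_right _ _ (v j), inner_sub_right, real_inner_comm,
      hd _ (Submodule.subset_span ⟨i, hi, rfl⟩), real_inner_comm, hd _ hb, sub_zero]

end InnerProductSpace

open Classical in
theorem finite_max_subdiff_and_U_space (n p : ℕ)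
    (fs : Fin (p + 1) → EuclideanSpace ℝ (Fin n) → ℝ)
    (hconv : ∀ i, ConvexOn ℝ Set.univ (fs i))
    (hC1 : ∀ i, ContDiff ℝ 1 (fs i))
    (F : EuclideanSpace ℝ (Fin n) → ℝ)
    (hF : F = fun x => Finset.univ.sup' Finset.univ_nonempty fun i => fs i x)
    (xbar : EuclideanSpace ℝ (Fin n)) :
    subdiff F xbar =
      convexHull ℝ {g | ∃ i, fs i xbar = F xbar ∧ g = gradient (fs i) xbar} ∧
    ∀ j, fs j xbar = F xbar →
      LinearIndependent ℝ (fun i : {i // fs i xbar = F xbar ∧ i ≠ j} =>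
        gradient (fs i.1) xbar - gradient (fs j) xbar) →
      ∀ α : Fin (p + 1) → ℝ,
        (∀ i, fs i xbar = F xbar → 0 < α i) →
        (∑ i ∈ Finset.univ.filter (fun i => fs i xbar = F xbar), α i) = 1 →
        ∀ gbar : EuclideanSpace ℝ (Fin n),
          gbar = ∑ i ∈ Finset.univ.filter (fun i => fs i xbar = F xbar),
            α i • gradient (fs i) xbar →
          {d : EuclideanSpace ℝ (Fin n) | ∀ g ∈ subdiff F xbar, ⟪d, g - gbar⟫ = 0} =
            ↑(Submodule.span ℝ
              {w : EuclideanSpace ℝ (Fin n) | ∃ i, fs i xbar = F xbar ∧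
                w = gradient (fs i) xbar - gradient (fs j) xbar})ᗮ := by
  have hdiff : ∀ i, DifferentiableAt ℝ (fs i) xbar := fun i =>
    (hC1 i).differentiable one_ne_zero xbar
  have hsubdiff := subdiff_sup'_eq_convexHull hF hconv hdiff
  refine ⟨hsubdiff, fun j hj _ α _ hα gbar hgbar => ?_⟩
  rw [hsubdiff, hgbar]
  exact setOf_forall_convexHull_inner_sub_eq_zero_eq_orthogonal (fun i => gradient (fs i) xbar)
    (fun i => fs i xbar = F xbar) hj (Finset.sum_filter_smul_sub_mem_span _ _ α hα j)
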